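/- arXiv:1402.5284 — 2 statements merged into one kernel-verified Lean document; each statement's English description precedes it below -/
import Mathlib

section
/- Let k ≤ min(m,n), f : ℝ^{m×n} → ℝ continuously differentiable, and X* ∈ M_{≤k} a critical point of f on M_{≤k}, meaning that the projection of −∇f(X*) onto the tangent cone T_{X*}M_{≤k} is zero (equivalently, −∇f(X*) lies in the polar of the tangent cone). Then either rank(X*) = k or ∇f(X*) = 0. -/
/-!
If `rank X* = s < k`, then `X* + t ξ` has rank at most `k` for every `t` and every `ξ` of rank
at most `k - s`, by subadditivity of the rank; so all such `ξ`, in particular all single-entry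
matrices, are tangent to `M_{≤k}` at `X*`. Testing criticality against the single-entry matrix
with entry `-(∇f X*)ᵢⱼ` at `(i, j)` gives `(∇f X*)ᵢⱼ² ≤ 0`.
-/

open scoped RealInnerProductSpace

/-- View a point of `ℝ^{m×n}` (with the Frobenius/Euclidean inner product) as a matrix. -/
def toMat {m n : ℕ} (x : EuclideanSpace ℝ (Fin m × Fin n)) : Matrix (Fin m) (Fin n) ℝ :=
  Matrix.of fun i j => x (i, j)

/-- Sequential tangent cone of `M ⊆ ℝ^{m×n}` at `x`. -/
def seqTangentCone {m n : ℕ} (M : Set (EuclideanSpace ℝ (Fin m × Fin n)))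
    (x : EuclideanSpace ℝ (Fin m × Fin n)) : Set (EuclideanSpace ℝ (Fin m × Fin n)) :=
  {ξ | ∃ (X : ℕ → EuclideanSpace ℝ (Fin m × Fin n)) (a : ℕ → ℝ),
      (∀ i, X i ∈ M) ∧ (∀ i, 0 < a i) ∧
      Filter.Tendsto X Filter.atTop (nhds x) ∧
      Filter.Tendsto (fun i => a i • (X i - x)) Filter.atTop (nhds ξ)}

theorem Matrix.rank_add_le {m n K : Type*} [Fintype n] [Field K] (A B : Matrix m n K) :
    (A + B).rank ≤ A.rank + B.rank := by
  rw [Matrix.rank, Matrix.rank, Matrix.rank, Matrix.mulVecLin_add]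
  exact (Submodule.finrank_mono (LinearMap.range_add_le _ _)).trans
    (Submodule.finrank_add_le_finrank_add_finrank _ _)

section toMat

variable {m n : ℕ}

@[simp]
lemma toMat_add (x y : EuclideanSpace ℝ (Fin m × Fin n)) : toMat (x + y) = toMat x + toMat y :=
  rfl

@[simp]
lemma toMat_smul (c : ℝ) (x : EuclideanSpace ℝ (Fin m × Fin n)) : toMat (c • x) = c • toMat x :=
  rfl

lemma toMat_single (i : Fin m) (j : Fin n) (c : ℝ) :
    toMat (EuclideanSpace.single (i, j) c) = Matrix.vecMulVec (Pi.single i c) (Pi.single j 1) := by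
  ext i' j'
  by_cases hi : i' = i <;> by_cases hj : j' = j <;>
    simp [toMat, Matrix.vecMulVec_apply, hi, hj]

lemma rank_toMat_single_le_one (i : Fin m) (j : Fin n) (c : ℝ) :
    (toMat (EuclideanSpace.single (i, j) c)).rank ≤ 1 := by
  rw [toMat_single]
  exact Matrix.rank_vecMulVec_le _ _

end toMat

lemma mem_seqTangentCone_of_add_smul_mem {m n : ℕ} {M : Set (EuclideanSpace ℝ (Fin m × Fin n))}
    {x ξ : EuclideanSpace ℝ (Fin m × Fin n)} (h : ∀ t : ℝ, 0 < t → x + t • ξ ∈ M) :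
    ξ ∈ seqTangentCone M x := by
  have hpos (i : ℕ) : (0 : ℝ) < i + 1 := by positivity
  refine ⟨fun i => x + ((i : ℝ) + 1)⁻¹ • ξ, fun i => (i : ℝ) + 1,
    fun i => h _ (inv_pos.2 (hpos i)), hpos, ?_, ?_⟩
  · simpa using tendsto_const_nhds.add
      ((tendsto_one_div_add_atTop_nhds_zero_nat (𝕜 := ℝ)).smul_const ξ)
  · simp [smul_smul, mul_inv_cancel₀ (hpos _).ne']

lemma mem_seqTangentCone_rank_le {m n k : ℕ} {X ξ : EuclideanSpace ℝ (Fin m × Fin n)}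
    (h : (toMat X).rank + (toMat ξ).rank ≤ k) :
    ξ ∈ seqTangentCone {Y | (toMat Y).rank ≤ k} X :=
  mem_seqTangentCone_of_add_smul_mem fun t ht => by
    have hsmul := Matrix.rank_smul_of_mem_nonZeroDivisors (toMat ξ)
      (mem_nonZeroDivisors_of_ne_zero ht.ne')
    have := Matrix.rank_add_le (toMat X) (t • toMat ξ)
    simp only [Set.mem_ofPred_eq, toMat_add, toMat_smul]
    omega

theorem stmt_8_general {m n k : ℕ}
    (f : EuclideanSpace ℝ (Fin m × Fin n) → ℝ)
    (Xstar : EuclideanSpace ℝ (Fin m × Fin n))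
    (hX : (toMat Xstar).rank ≤ k)
    (hcrit : ∀ Ξ ∈ seqTangentCone {Y : EuclideanSpace ℝ (Fin m × Fin n) |
        (toMat Y).rank ≤ k} Xstar, ⟪-(gradient f Xstar), Ξ⟫ ≤ 0) :
    (toMat Xstar).rank = k ∨ gradient f Xstar = 0 := by
  refine or_iff_not_imp_left.2 fun hrk => ?_
  have hlt : (toMat Xstar).rank < k := lt_of_le_of_ne hX hrk
  set g := gradient f Xstar
  ext ⟨i, j⟩
  have hsingle := rank_toMat_single_le_one i j (-g (i, j))
  have h := hcrit _ (mem_seqTangentCone_rank_le (ξ := EuclideanSpace.single (i, j) (-g (i, j)))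
    (by omega))
  have hsq : g (i, j) * g (i, j) ≤ 0 := by
    simpa [real_inner_comm, EuclideanSpace.inner_single_left] using h
  simpa using mul_self_eq_zero.1 (le_antisymm hsq (mul_self_nonneg _))

/-- Let `k ≤ min(m,n)`, `f` continuously differentiable and `X*` a critical
point of `f` on `M_{≤k}` (the projection of `−∇f(X*)` onto the tangent cone is zero, i.e.
`−∇f(X*)` lies in the polar of the tangent cone). Then `rank X* = k` or `∇f(X*) = 0`. -/
theorem stmt_8 {m n k : ℕ} (hkm : k ≤ m) (hkn : k ≤ n)
    (f : EuclideanSpace ℝ (Fin m × Fin n) → ℝ) (hf : ContDiff ℝ 1 f)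
    (Xstar : EuclideanSpace ℝ (Fin m × Fin n))
    (hX : (toMat Xstar).rank ≤ k)
    (hcrit : ∀ Ξ ∈ seqTangentCone {Y : EuclideanSpace ℝ (Fin m × Fin n) |
        (toMat Y).rank ≤ k} Xstar, ⟪-(gradient f Xstar), Ξ⟫ ≤ 0) :
    (toMat Xstar).rank = k ∨ gradient f Xstar = 0 :=
  stmt_8_general f Xstar hX hcrit
end

section
/- Let X ∈ ℝ^{m×n} with rank(X) = s ≤ k. There exists δ > 0 such that every Y ∈ M_{≤k} with ‖Y − X‖_F < δ can be written Y = Y_s + Y_{k−s} where Y_s is a best rank-s approximation of Y satisfying rank(Y_s) = s and ‖Y_s − X‖_F < 2δ, and rank(Y_{k−s}) ≤ k−s. -/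
open Matrix
/-- Column space of a matrix. -/
def colSpace {m n : ℕ} (X : Matrix (Fin m) (Fin n) ℝ) : Set (Fin m → ℝ) :=
  {y | ∃ v, X.mulVec v = y}

/-- Row space of a matrix. -/
def rowSpace {m n : ℕ} (X : Matrix (Fin m) (Fin n) ℝ) : Set (Fin n → ℝ) :=
  colSpace Xᵀ

/-- Orthogonal complement (w.r.t. the Euclidean dot product) of a set of vectors. -/
def perp {p : ℕ} (S : Set (Fin p → ℝ)) : Set (Fin p → ℝ) :=
  {x | ∀ u ∈ S, ∑ i, x i * u i = 0}

/-- `A ⊗ B`: matrices whose column space lies in `A` and row space lies in `B`. -/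
def tensorSp {m n : ℕ} (A : Set (Fin m → ℝ)) (B : Set (Fin n → ℝ)) :
    Set (Matrix (Fin m) (Fin n) ℝ) :=
  {Z | (∀ v, Z.mulVec v ∈ A) ∧ (∀ u, Zᵀ.mulVec u ∈ B)}

/-- Frobenius inner product. -/
noncomputable def frobInner {m n : ℕ} (A B : Matrix (Fin m) (Fin n) ℝ) : ℝ :=
  ∑ i, ∑ j, A i j * B i j

/-- Frobenius norm. -/
noncomputable def frobNorm {m n : ℕ} (A : Matrix (Fin m) (Fin n) ℝ) : ℝ :=
  Real.sqrt (frobInner A A)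

/-- The tangent space `T_X M_s = (U⊗V) ⊕ (U^⊥⊗V) ⊕ (U⊗V^⊥)`, `U, V` column/row space of `X`. -/
def tangentMs {m n : ℕ} (X : Matrix (Fin m) (Fin n) ℝ) : Set (Matrix (Fin m) (Fin n) ℝ) :=
  {Ξ | ∃ Z₁ ∈ tensorSp (colSpace X) (rowSpace X),
       ∃ Z₂ ∈ tensorSp (perp (colSpace X)) (rowSpace X),
       ∃ Z₃ ∈ tensorSp (colSpace X) (perp (rowSpace X)), Ξ = Z₁ + Z₂ + Z₃}

/-- Sequential tangent cone of a set of matrices, w.r.t. Frobenius distance. -/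
def matTangentCone {m n : ℕ} (M : Set (Matrix (Fin m) (Fin n) ℝ))
    (X : Matrix (Fin m) (Fin n) ℝ) : Set (Matrix (Fin m) (Fin n) ℝ) :=
  {Ξ | ∃ (Y : ℕ → Matrix (Fin m) (Fin n) ℝ) (a : ℕ → ℝ),
      (∀ i, Y i ∈ M) ∧ (∀ i, 0 < a i) ∧
      Filter.Tendsto (fun i => frobNorm (Y i - X)) Filter.atTop (nhds 0) ∧
      Filter.Tendsto (fun i => frobNorm (a i • (Y i - X) - Ξ)) Filter.atTop (nhds 0)}

/-- `P` is the orthogonal projector (symmetric idempotent matrix) onto `U`. -/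
def IsOrthProjOnto {p : ℕ} (P : Matrix (Fin p) (Fin p) ℝ) (U : Set (Fin p → ℝ)) : Prop :=
  Pᵀ = P ∧ P * P = P ∧ colSpace P = U

/-!
Rank is lower semicontinuous, so every `Y` close enough to `X` has rank at least `s`. The
matrices of rank `≤ s` form a closed set, hence `Y` has a best rank-`s` approximation `Ys`.
Whenever the whole line `Ys + t • W` stays in that set, first-order optimality makes `Y - Ys`
Frobenius-orthogonal to `W`. Taking `W = Ys * N` and `W = N * Ys` gives
`Ysᵀ * (Y - Ys) = 0 = (Y - Ys) * Ysᵀ`, so the column and row spaces of `Ys` and `Y - Ys` are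
orthogonal and their ranks add up to at most `rank Y ≤ k`. If `rank Ys < s`, every
`W = single i j 1` is allowed, which forces `Y = Ys`, contradicting `rank Y ≥ s`. Finally `X`
itself competes with `Ys`, so `‖Ys - X‖ ≤ ‖Ys - Y‖ + ‖Y - X‖ ≤ 2 ‖Y - X‖`.
-/

section Rank

variable {K : Type*} [Field K] {m n : Type*} [Fintype n]

theorem rank_add_le_rank_add_rank (A B : Matrix m n K) : (A + B).rank ≤ A.rank + B.rank := by
  rw [Matrix.rank, Matrix.rank, Matrix.rank, mulVecLin_add]
  exact (Submodule.finrank_mono (LinearMap.range_add_le _ _)).trans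
    (Submodule.finrank_add_le_finrank_add_finrank _ _)

theorem rank_smul_le (t : K) (A : Matrix m n K) : (t • A).rank ≤ A.rank := by
  classical
  simpa [Matrix.mul_smul] using rank_mul_le_left A (t • (1 : Matrix n n K))

theorem rank_single_one_le [DecidableEq m] [DecidableEq n] (i : m) (j : n) :
    (single i j (1 : K)).rank ≤ 1 := by
  rw [single_eq_single_vecMulVec_single]
  exact rank_vecMulVec_le _ _

theorem range_mulVecLin_mul_le {p : Type*} [Fintype p] (A : Matrix m n K) (B : Matrix n p K) :
    LinearMap.range (A * B).mulVecLin ≤ LinearMap.range A.mulVecLin := by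
  rw [mulVecLin_mul]
  exact LinearMap.range_comp_le_range _ _

variable [Fintype m] [LinearOrder K] [IsStrictOrderedRing K]

theorem disjoint_range_mulVecLin_of_transpose_mul_eq_zero {A B : Matrix m n K}
    (h : Aᵀ * B = 0) : Disjoint (LinearMap.range A.mulVecLin) (LinearMap.range B.mulVecLin) := by
  rw [Submodule.disjoint_def]
  rintro _ ⟨u, rfl⟩ ⟨v, hv⟩
  simp only [mulVecLin_apply] at hv ⊢
  have : A *ᵥ u ⬝ᵥ A *ᵥ u = 0 :=
    calc A *ᵥ u ⬝ᵥ A *ᵥ u = u ᵥ* Aᵀ ⬝ᵥ B *ᵥ v := by rw [vecMul_transpose, hv]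
      _ = 0 := by rw [← dotProduct_mulVec, mulVec_mulVec, h, zero_mulVec, dotProduct_zero]
  exact dotProduct_self_eq_zero.mp this

theorem rank_add_rank_le_rank_add {A B : Matrix m n K} (h₁ : Aᵀ * B = 0) (h₂ : A * Bᵀ = 0) :
    A.rank + B.rank ≤ (A + B).rank := by
  have h₃ : B * Aᵀ = 0 := by simpa using congrArg transpose h₂
  set RA := LinearMap.range (A * Aᵀ).mulVecLin
  set RB := LinearMap.range (B * Bᵀ).mulVecLin
  have hdisj : Disjoint RA RB :=
    (disjoint_range_mulVecLin_of_transpose_mul_eq_zero h₁).mono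
      (range_mulVecLin_mul_le _ _) (range_mulVecLin_mul_le _ _)
  have hle : RA ⊔ RB ≤ LinearMap.range (A + B).mulVecLin := by
    refine sup_le ?_ ?_
    · simpa [RA, Matrix.add_mul, h₃] using range_mulVecLin_mul_le (A + B) Aᵀ
    · simpa [RB, Matrix.add_mul, h₂] using range_mulVecLin_mul_le (A + B) Bᵀ
  calc A.rank + B.rank = Module.finrank K RA + Module.finrank K RB := by
        rw [← rank_self_mul_transpose A, ← rank_self_mul_transpose B]; rfl
    _ = Module.finrank K ↥(RA ⊔ RB) := by
        rw [← Submodule.finrank_sup_add_finrank_inf_eq, disjoint_iff.mp hdisj, finrank_bot,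
          add_zero]
    _ ≤ (A + B).rank := Submodule.finrank_mono hle

end Rank

theorem isOpen_setOf_le_rank {𝕜 : Type*} [NontriviallyNormedField 𝕜] [CompleteSpace 𝕜]
    {m n : Type*} [Fintype m] [Fintype n] [DecidableEq n] (r : ℕ) :
    IsOpen {A : Matrix m n 𝕜 | r ≤ A.rank} := by
  have hcont : Continuous fun A : Matrix m n 𝕜 => LinearMap.toContinuousLinearMap (toLin' A) :=
    (LinearMap.toContinuousLinearMap.toLinearMap ∘ₗ
      (toLin' : Matrix m n 𝕜 ≃ₗ[𝕜] _).toLinearMap).continuous_of_finiteDimensional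
  convert (isOpen_setOfPred_nat_le_rank r).preimage hcont using 2 with A
  simp only [rank, toLin'_apply', LinearMap.rank, ← Module.finrank_eq_rank, ge_iff_le, Nat.cast_le,
    Set.preimage_ofPred_eq, LinearMap.coe_toContinuousLinearMap]
  rfl

theorem isClosed_setOf_rank_le {𝕜 : Type*} [NontriviallyNormedField 𝕜] [CompleteSpace 𝕜]
    {m n : Type*} [Fintype m] [Fintype n] (r : ℕ) :
    IsClosed {A : Matrix m n 𝕜 | A.rank ≤ r} := by
  classical
  convert (isOpen_setOf_le_rank (𝕜 := 𝕜) (m := m) (n := n) (r + 1)).isClosed_compl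
  ext A
  simp only [Set.mem_compl_iff, Set.mem_ofPred_eq, not_le, Nat.lt_add_one_iff]

def IsBestRankApprox {m n : ℕ} (s : ℕ) (Y Ys : Matrix (Fin m) (Fin n) ℝ) : Prop :=
  Ys.rank ≤ s ∧ ∀ B : Matrix (Fin m) (Fin n) ℝ, B.rank ≤ s → frobNorm (Y - Ys) ≤ frobNorm (Y - B)

section Frobenius

attribute [local instance] Matrix.frobeniusNormedAddCommGroup Matrix.frobeniusNormedSpace

variable {m n : ℕ}

theorem frobNorm_eq_norm (A : Matrix (Fin m) (Fin n) ℝ) : frobNorm A = ‖A‖ := by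
  simp [frobNorm, frobInner, frobenius_norm_def, Real.sqrt_eq_rpow, ← sq]

theorem frobNorm_sub_comm (A B : Matrix (Fin m) (Fin n) ℝ) :
    frobNorm (A - B) = frobNorm (B - A) := by
  simp only [frobNorm_eq_norm, norm_sub_rev]

theorem frobNorm_sub_le_frobNorm_sub_add_frobNorm_sub (A B C : Matrix (Fin m) (Fin n) ℝ) :
    frobNorm (A - C) ≤ frobNorm (A - B) + frobNorm (B - C) := by
  simp only [frobNorm_eq_norm, norm_sub_le_norm_sub_add_norm_sub]

theorem exists_forall_frobNorm_sub_lt_rank_le (X : Matrix (Fin m) (Fin n) ℝ) :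
    ∃ δ > 0, ∀ Y : Matrix (Fin m) (Fin n) ℝ, frobNorm (Y - X) < δ → X.rank ≤ Y.rank := by
  obtain ⟨δ, hδ, hball⟩ := Metric.isOpen_iff.mp (isOpen_setOf_le_rank X.rank) X (le_refl X.rank)
  exact ⟨δ, hδ, fun Y hY => hball (by rwa [Metric.mem_ball, dist_eq_norm, ← frobNorm_eq_norm])⟩

theorem exists_isBestRankApprox (s : ℕ) (Y : Matrix (Fin m) (Fin n) ℝ) :
    ∃ Ys, IsBestRankApprox s Y Ys := by
  obtain ⟨Ys, hYs, hdist⟩ := (isClosed_setOf_rank_le s).exists_infDist_eq_dist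
    ⟨0, by simp⟩ Y
  refine ⟨Ys, hYs, fun B hB => ?_⟩
  rw [frobNorm_eq_norm, frobNorm_eq_norm, ← dist_eq_norm, ← dist_eq_norm, ← hdist]
  exact Metric.infDist_le_dist_of_mem hB

end Frobenius

section FrobeniusInner

variable {m n p : ℕ}

theorem frobInner_eq_trace (A B : Matrix (Fin m) (Fin n) ℝ) : frobInner A B = (Aᵀ * B).trace := by
  simp only [frobInner, trace, diag, mul_apply, transpose_apply]
  exact Finset.sum_comm

theorem frobInner_self_nonneg (A : Matrix (Fin m) (Fin n) ℝ) : 0 ≤ frobInner A A :=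
  Finset.sum_nonneg fun _ _ => Finset.sum_nonneg fun _ _ => mul_self_nonneg _

theorem frobInner_self_eq_zero {A : Matrix (Fin m) (Fin n) ℝ} : frobInner A A = 0 ↔ A = 0 := by
  rw [frobInner_eq_trace, ← conjTranspose_eq_transpose_of_trivial,
    trace_conjTranspose_mul_self_eq_zero_iff]

theorem frobInner_sub_smul_self (D W : Matrix (Fin m) (Fin n) ℝ) (t : ℝ) :
    frobInner (D - t • W) (D - t • W) =
      frobInner D D - 2 * t * frobInner D W + t ^ 2 * frobInner W W := by
  simp only [frobInner, Matrix.sub_apply, Matrix.smul_apply, smul_eq_mul, Finset.mul_sum,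
    ← Finset.sum_sub_distrib, ← Finset.sum_add_distrib]
  congr! 2
  ring

theorem frobInner_mul_left (D : Matrix (Fin m) (Fin n) ℝ) (A : Matrix (Fin m) (Fin p) ℝ)
    (N : Matrix (Fin p) (Fin n) ℝ) : frobInner D (A * N) = frobInner (Aᵀ * D) N := by
  rw [frobInner_eq_trace, frobInner_eq_trace, transpose_mul, transpose_transpose,
    Matrix.mul_assoc]

theorem frobInner_mul_right (D : Matrix (Fin m) (Fin n) ℝ) (N : Matrix (Fin m) (Fin p) ℝ)
    (A : Matrix (Fin p) (Fin n) ℝ) : frobInner D (N * A) = frobInner (D * Aᵀ) N := by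
  rw [frobInner_eq_trace, frobInner_eq_trace, transpose_mul, transpose_transpose,
    ← Matrix.mul_assoc, trace_mul_cycle]

theorem frobInner_single_one (D : Matrix (Fin m) (Fin n) ℝ) (i : Fin m) (j : Fin n) :
    frobInner D (single i j 1) = D i j := by
  simp [frobInner_eq_trace, trace_mul_single]

theorem frobNorm_le_frobNorm_iff {A B : Matrix (Fin m) (Fin n) ℝ} :
    frobNorm A ≤ frobNorm B ↔ frobInner A A ≤ frobInner B B :=
  Real.sqrt_le_sqrt_iff (frobInner_self_nonneg B)

theorem frobInner_eq_zero_of_forall_frobNorm_le {Y Z W : Matrix (Fin m) (Fin n) ℝ}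
    (h : ∀ t : ℝ, frobNorm (Y - Z) ≤ frobNorm (Y - (Z + t • W))) :
    frobInner (Y - Z) W = 0 := by
  set a := frobInner (Y - Z) W
  set c := frobInner W W
  have hc : 0 ≤ c := frobInner_self_nonneg W
  -- at `t = a / (c + 1)` the inequality `0 ≤ t ^ 2 * c - 2 * t * a` becomes `a ^ 2 * (c + 2) ≤ 0`
  have key := h (a / (c + 1))
  rw [← sub_sub, frobNorm_le_frobNorm_iff, frobInner_sub_smul_self] at key
  have : a ^ 2 * (c + 2) ≤ 0 := by
    field_simp at key
    nlinarith
  nlinarith [sq_nonneg a]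

end FrobeniusInner

namespace IsBestRankApprox

variable {m n s : ℕ} {Y Ys : Matrix (Fin m) (Fin n) ℝ}

theorem frobInner_sub_eq_zero (h : IsBestRankApprox s Y Ys) {W : Matrix (Fin m) (Fin n) ℝ}
    (hW : ∀ t : ℝ, (Ys + t • W).rank ≤ s) : frobInner (Y - Ys) W = 0 :=
  frobInner_eq_zero_of_forall_frobNorm_le fun t => h.2 _ (hW t)

theorem transpose_mul_sub_eq_zero (h : IsBestRankApprox s Y Ys) : Ysᵀ * (Y - Ys) = 0 := by
  have hW := h.frobInner_sub_eq_zero (W := Ys * (Ysᵀ * (Y - Ys))) fun t => by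
    rw [← Matrix.mul_smul, ← Matrix.mul_one Ys, Matrix.mul_assoc, ← Matrix.mul_add,
      Matrix.one_mul]
    exact (rank_mul_le_left _ _).trans h.1
  rwa [frobInner_mul_left, frobInner_self_eq_zero] at hW

theorem sub_mul_transpose_eq_zero (h : IsBestRankApprox s Y Ys) : (Y - Ys) * Ysᵀ = 0 := by
  have hW := h.frobInner_sub_eq_zero (W := ((Y - Ys) * Ysᵀ) * Ys) fun t => by
    rw [← Matrix.smul_mul, ← Matrix.one_mul Ys, ← Matrix.mul_assoc, ← Matrix.add_mul,
      Matrix.mul_one]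
    exact (rank_mul_le_right _ _).trans h.1
  rwa [frobInner_mul_right, frobInner_self_eq_zero] at hW

theorem rank_eq (h : IsBestRankApprox s Y Ys) (hY : s ≤ Y.rank) : Ys.rank = s := by
  refine le_antisymm h.1 (not_lt.mp fun hlt => ?_)
  have hYs : Y = Ys := by
    refine sub_eq_zero.mp (Matrix.ext fun i j => ?_)
    have hrank : ∀ t : ℝ, (Ys + t • single i j 1).rank ≤ s := fun t => by
      have h₁ := rank_add_le_rank_add_rank Ys (t • single i j (1 : ℝ))
      have h₂ := (rank_smul_le t (single i j (1 : ℝ))).trans (rank_single_one_le i j)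
      omega
    simpa [frobInner_single_one] using h.frobInner_sub_eq_zero hrank
  subst hYs
  omega

theorem rank_add_rank_sub_le (h : IsBestRankApprox s Y Ys) : Ys.rank + (Y - Ys).rank ≤ Y.rank := by
  have h₂ : Ys * (Y - Ys)ᵀ = 0 := by simpa using congrArg transpose h.sub_mul_transpose_eq_zero
  simpa using rank_add_rank_le_rank_add h.transpose_mul_sub_eq_zero h₂

end IsBestRankApprox

theorem stmt_13_general {m n s k : ℕ} (X : Matrix (Fin m) (Fin n) ℝ)
    (hrank : X.rank = s) :
    ∃ δ : ℝ, 0 < δ ∧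
      ∀ Y : Matrix (Fin m) (Fin n) ℝ, Y.rank ≤ k → frobNorm (Y - X) < δ →
        ∃ Ys Yk : Matrix (Fin m) (Fin n) ℝ,
          Y = Ys + Yk ∧
          Ys.rank = s ∧
          (∀ B : Matrix (Fin m) (Fin n) ℝ, B.rank ≤ s →
            frobNorm (Y - Ys) ≤ frobNorm (Y - B)) ∧
          frobNorm (Ys - X) < 2 * δ ∧
          Yk.rank ≤ k - s := by
  obtain ⟨δ, hδ, hlsc⟩ := exists_forall_frobNorm_sub_lt_rank_le X
  refine ⟨δ, hδ, fun Y hYk hYX => ?_⟩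
  obtain ⟨Ys, hbest⟩ := exists_isBestRankApprox s Y
  have hYs : Ys.rank = s := hbest.rank_eq (hrank ▸ hlsc Y hYX)
  refine ⟨Ys, Y - Ys, (add_sub_cancel Ys Y).symm, hYs, hbest.2, ?_, ?_⟩
  · calc frobNorm (Ys - X) ≤ frobNorm (Ys - Y) + frobNorm (Y - X) :=
          frobNorm_sub_le_frobNorm_sub_add_frobNorm_sub _ _ _
      _ = frobNorm (Y - Ys) + frobNorm (Y - X) := by rw [frobNorm_sub_comm]
      _ ≤ frobNorm (Y - X) + frobNorm (Y - X) := by gcongr; exact hbest.2 X hrank.le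
      _ < 2 * δ := by linarith
  · have := hbest.rank_add_rank_sub_le
    omega

/-- For `X` of rank `s ≤ k` there is `δ > 0` such that every `Y ∈ M_{≤k}`
with `‖Y − X‖_F < δ` splits as `Y = Y_s + Y_{k−s}` with `Y_s` a best rank-`s`
approximation of `Y`, `rank Y_s = s`, `‖Y_s − X‖_F < 2δ`, and `rank Y_{k−s} ≤ k−s`. -/
theorem stmt_13 {m n s k : ℕ} (X : Matrix (Fin m) (Fin n) ℝ)
    (hrank : X.rank = s) (hsk : s ≤ k) :
    ∃ δ : ℝ, 0 < δ ∧
      ∀ Y : Matrix (Fin m) (Fin n) ℝ, Y.rank ≤ k → frobNorm (Y - X) < δ →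
        ∃ Ys Yk : Matrix (Fin m) (Fin n) ℝ,
          Y = Ys + Yk ∧
          Ys.rank = s ∧
          (∀ B : Matrix (Fin m) (Fin n) ℝ, B.rank ≤ s →
            frobNorm (Y - Ys) ≤ frobNorm (Y - B)) ∧
          frobNorm (Ys - X) < 2 * δ ∧
          Yk.rank ≤ k - s :=
  stmt_13_general X hrank
end
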